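/- arXiv:2603.29302 — 3 statements merged into one kernel-verified Lean document; each statement's English description precedes it below -/
import Mathlib

section
/- Let r > 0 with Q0^2 = r^2 + 1 and let z, λ be nonzero complex numbers with z + 1/z = i r(λ + 1/λ) and ζ = λ/z, ζ ≠ 0, i r ζ ≠ 1. If |λ| = 1 then |ζ - i r| = Q0, i.e. ζ lies on the circle of radius Q0 centered at i r. -/
/-!
Clearing denominators in the uniformization relation gives `λ² (i r ζ - 1) = ζ (ζ - i r)`, so
`|λ| = 1` forces `|i r ζ - 1| = |ζ| |ζ - i r|`. With `s = |ζ|²` and `t = 2 r Im ζ` this reads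
`r² s + 1 + t = s (s - t + r²)`, i.e. `(s + 1)(s - t - 1) = 0`; hence `s - t = 1` and
`|ζ - i r|² = s - t + r² = r² + 1`.
-/

open Complex

theorem sq_mul_sub_one_eq_of_add_inv_eq {z lam c : ℂ} (hz : z ≠ 0) (hlam : lam ≠ 0)
    (h : z + 1 / z = c * (lam + 1 / lam)) :
    lam ^ 2 * (c * (lam / z) - 1) = lam / z * (lam / z - c) := by
  have hpoly : z ^ 2 * lam + lam = c * (lam ^ 2 * z + z) := by
    field_simp at h
    linear_combination h
  field_simp
  linear_combination -hpoly

theorem normSq_I_mul_ofReal_mul_sub_one (r : ℝ) (w : ℂ) :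
    normSq (I * r * w - 1) = r ^ 2 * normSq w + 1 + 2 * r * w.im := by
  simp only [normSq_apply, sub_re, sub_im, mul_re, mul_im, I_re, I_im, ofReal_re, ofReal_im,
    one_re, one_im]
  ring

theorem normSq_sub_I_mul_ofReal (r : ℝ) (w : ℂ) :
    normSq (w - I * r) = normSq w - 2 * r * w.im + r ^ 2 := by
  simp only [normSq_apply, sub_re, sub_im, mul_re, mul_im, I_re, I_im, ofReal_re, ofReal_im]
  ring

theorem norm_sub_I_mul_ofReal_eq_sqrt {r : ℝ} {w : ℂ}
    (h : ‖I * r * w - 1‖ = ‖w‖ * ‖w - I * r‖) :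
    ‖w - I * r‖ = Real.sqrt (r ^ 2 + 1) := by
  have hsq : normSq (I * r * w - 1) = normSq w * normSq (w - I * r) := by
    simp only [normSq_eq_norm_sq, h, mul_pow]
  rw [normSq_I_mul_ofReal_mul_sub_one, normSq_sub_I_mul_ofReal] at hsq
  have hfactor : (normSq w + 1) * (normSq w - 2 * r * w.im - 1) = 0 := by
    linear_combination -hsq
  have hcircle : normSq w - 2 * r * w.im = 1 := by
    have hpos : normSq w + 1 ≠ 0 := (add_pos_of_nonneg_of_pos (normSq_nonneg w) one_pos).ne'
    linear_combination (mul_eq_zero.mp hfactor).resolve_left hpos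
  rw [norm_def, normSq_sub_I_mul_ofReal, hcircle, add_comm]

theorem lambda_unit_circle_maps_to_Sigma_general (r Q0 : ℝ)
    (hQ0 : Q0 = Real.sqrt (r ^ 2 + 1)) (z lam : ℂ)
    (hz : z ≠ 0) (hlam : lam ≠ 0)
    (huni : z + 1 / z = I * r * (lam + 1 / lam))
    (zeta : ℂ) (hzeta : zeta = lam / z)
    (habs : ‖lam‖ = 1) :
    ‖zeta - I * r‖ = Q0 := by
  subst hQ0 hzeta
  apply norm_sub_I_mul_ofReal_eq_sqrt
  have hrel := congrArg norm (sq_mul_sub_one_eq_of_add_inv_eq hz hlam huni)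
  rwa [norm_mul, norm_pow, habs, one_pow, one_mul, norm_mul] at hrel

/-- If |λ| = 1 then ζ lies on the circle of radius Q0 centered at i r. -/
theorem lambda_unit_circle_maps_to_Sigma (r Q0 : ℝ) (hr : 0 < r)
    (hQ0 : Q0 = Real.sqrt (r ^ 2 + 1)) (z lam : ℂ)
    (hz : z ≠ 0) (hlam : lam ≠ 0)
    (huni : z + 1 / z = I * r * (lam + 1 / lam))
    (zeta : ℂ) (hzeta : zeta = lam / z)
    (hz1 : zeta ≠ 0) (hz2 : I * r * zeta - 1 ≠ 0)
    (habs : ‖lam‖ = 1) :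
    ‖zeta - I * r‖ = Q0 :=
  lambda_unit_circle_maps_to_Sigma_general r Q0 hQ0 z lam hz hlam huni zeta hzeta habs
end

section
/- Let Q± be nonzero complex numbers with |Q+| = |Q-| = Q0, σ = ±1, r^2 = σ Q+ conj(Q-) - 1 real, and z, λ nonzero complex with z + 1/z = i r(λ + 1/λ). Define U± = [[z, Q±],[σ conj(Q∓), 1/z]] and Y± = [[Q±, i r λ - z],[i r λ - z, -σ conj(Q∓)]]. Then U± Y± = Y± · diag(i r λ, i r / λ); that is, the columns of Y± are eigenvectors of U± with eigenvalues i r λ and i r/λ respectively. -/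
/-! Writing `μ = i r`, the uniformization relation says `1 / z = μ (λ + 1 / λ) - z`, hence
`(μ λ - z) (z - μ / λ) = 1 - μ ^ 2 = r ^ 2 + 1`, which is `Q± σ conj(Q∓)` because `σ` is real.
Every entry of `U Y = Y diag(μ λ, μ / λ)` reduces to this identity or to the uniformization
relation itself. -/

open Complex Matrix

section Field

variable {K : Type*} [Field K]

theorem mul_sub_mul_sub_div_eq_one_sub_sq {μ z lam : K} (hz : z ≠ 0) (hlam : lam ≠ 0)
    (huni : z + 1 / z = μ * (lam + 1 / lam)) :
    (μ * lam - z) * (z - μ / lam) = 1 - μ ^ 2 := by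
  linear_combination -z * huni - μ ^ 2 * mul_inv_cancel₀ hlam + mul_inv_cancel₀ hz

theorem eigenvector_matrix_mul_eq {μ A B z lam : K} (hz : z ≠ 0) (hlam : lam ≠ 0)
    (hAB : A * B = 1 - μ ^ 2) (huni : z + 1 / z = μ * (lam + 1 / lam)) :
    !![z, A; B, 1 / z] * !![A, μ * lam - z; μ * lam - z, -B]
      = !![A, μ * lam - z; μ * lam - z, -B] * !![μ * lam, 0; 0, μ / lam] := by
  have hkey := mul_sub_mul_sub_div_eq_one_sub_sq hz hlam huni
  ext i j
  fin_cases i <;> fin_cases j <;> simp [Matrix.mul_apply, Fin.sum_univ_two]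
  · ring
  · linear_combination hkey - hAB
  · linear_combination hAB - hkey + (μ * lam - z) * huni
  · linear_combination -B * huni

end Field

theorem columns_of_Y_are_eigenvectors_of_U_general (σ : ℂ) (hσ : σ = 1 ∨ σ = -1)
    (Qp Qm : ℂ) (r : ℝ)
    (hrQ : σ * Qp * (starRingEnd ℂ) Qm - 1 = (r : ℂ) ^ 2)
    (z lam : ℂ) (hz : z ≠ 0) (hlam : lam ≠ 0)
    (huni : z + 1 / z = I * r * (lam + 1 / lam)) :
    (!![z, Qp; σ * (starRingEnd ℂ) Qm, 1 / z] : Matrix (Fin 2) (Fin 2) ℂ) *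
        !![Qp, I * r * lam - z; I * r * lam - z, -(σ * (starRingEnd ℂ) Qm)]
      = !![Qp, I * r * lam - z; I * r * lam - z, -(σ * (starRingEnd ℂ) Qm)] *
        !![I * r * lam, 0; 0, I * r / lam] ∧
    (!![z, Qm; σ * (starRingEnd ℂ) Qp, 1 / z] : Matrix (Fin 2) (Fin 2) ℂ) *
        !![Qm, I * r * lam - z; I * r * lam - z, -(σ * (starRingEnd ℂ) Qp)]
      = !![Qm, I * r * lam - z; I * r * lam - z, -(σ * (starRingEnd ℂ) Qp)] *
        !![I * r * lam, 0; 0, I * r / lam] := by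
  have hσ_real : (starRingEnd ℂ) σ = σ := by rcases hσ with rfl | rfl <;> simp
  have hrQ' : σ * Qm * (starRingEnd ℂ) Qp - 1 = (r : ℂ) ^ 2 := by
    have hconj := congrArg (starRingEnd ℂ) hrQ
    simp only [map_sub, map_mul, map_one, map_pow, conj_ofReal, conj_conj, hσ_real] at hconj
    linear_combination hconj
  exact ⟨eigenvector_matrix_mul_eq hz hlam (by linear_combination hrQ + (r : ℂ) ^ 2 * I_sq) huni,
    eigenvector_matrix_mul_eq hz hlam (by linear_combination hrQ' + (r : ℂ) ^ 2 * I_sq) huni⟩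

/-- The columns of Y± are eigenvectors of U± with eigenvalues i r λ and i r/λ:
U± Y± = Y± diag(i r λ, i r/λ), for both sign choices. -/
theorem columns_of_Y_are_eigenvectors_of_U (σ : ℂ) (hσ : σ = 1 ∨ σ = -1)
    (Qp Qm : ℂ) (hQp : Qp ≠ 0) (hQm : Qm ≠ 0) (Q0 r : ℝ) (hr : 0 < r)
    (habsp : ‖Qp‖ = Q0) (habsm : ‖Qm‖ = Q0)
    (hrQ : σ * Qp * (starRingEnd ℂ) Qm - 1 = (r : ℂ) ^ 2)
    (z lam : ℂ) (hz : z ≠ 0) (hlam : lam ≠ 0)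
    (huni : z + 1 / z = I * r * (lam + 1 / lam)) :
    (!![z, Qp; σ * (starRingEnd ℂ) Qm, 1 / z] : Matrix (Fin 2) (Fin 2) ℂ) *
        !![Qp, I * r * lam - z; I * r * lam - z, -(σ * (starRingEnd ℂ) Qm)]
      = !![Qp, I * r * lam - z; I * r * lam - z, -(σ * (starRingEnd ℂ) Qm)] *
        !![I * r * lam, 0; 0, I * r / lam] ∧
    (!![z, Qm; σ * (starRingEnd ℂ) Qp, 1 / z] : Matrix (Fin 2) (Fin 2) ℂ) *
        !![Qm, I * r * lam - z; I * r * lam - z, -(σ * (starRingEnd ℂ) Qp)]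
      = !![Qm, I * r * lam - z; I * r * lam - z, -(σ * (starRingEnd ℂ) Qp)] *
        !![I * r * lam, 0; 0, I * r / lam] :=
  columns_of_Y_are_eigenvectors_of_U_general σ hσ Qp Qm r hrQ z lam hz hlam huni
end

section
/- Let V± and Y± be as above with z + 1/z = i r(λ + 1/λ). Then V± Y± = Y± · diag(r λ (z - 1/z), (r/λ)(z - 1/z)); i.e. the columns of Y± are eigenvectors of V± with eigenvalues r λ (z - 1/z) and (r/λ)(z - 1/z). -/
/-!
Since `I - I z² = -i (z - 1/z) z` and `-I + I/z² = -i (z - 1/z) / z`, the matrix `V±` is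
`-i (z - 1/z)` times `M = [[z, Q±], [σ conj Q∓, 1/z]]`. The relation `σ Q± conj Q∓ = r² + 1`
gives `det M = -r²`, and the spectral relation gives `tr M = z + 1/z = i r (λ + 1/λ)`, so the
eigenvalues of `M` are `i r λ` and `i r / λ`, with the columns of `Y±` as eigenvectors.
Multiplying by `-i (z - 1/z)` turns them into `r λ (z - 1/z)` and `(r/λ)(z - 1/z)`.
-/

open Complex Matrix ComplexConjugate

section

variable (σ Q Q' r z lam : ℂ)

theorem V_eq_smul (hz : z ≠ 0) :
    (!![I - I * z ^ 2, -(I * Q * (z - 1 / z));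
        -(I * σ * Q' * (z - 1 / z)), -I + I / z ^ 2] : Matrix (Fin 2) (Fin 2) ℂ)
      = (-I * (z - 1 / z)) • !![z, Q; σ * Q', 1 / z] := by
  rw [smul_of, smul_vec2, smul_vec2, smul_vec2]
  congr 1
  refine vec2_eq (vec2_eq ?_ ?_) (vec2_eq ?_ ?_) <;> simp only [smul_eq_mul] <;> field_simp <;> ring

variable {σ Q Q' r z lam}

theorem M_mul_Y (hz : z ≠ 0) (hlam : lam ≠ 0)
    (hQ : Q * (σ * Q') = r ^ 2 + 1)
    (htr : z + 1 / z = I * r * (lam + 1 / lam)) :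
    !![z, Q; σ * Q', 1 / z] * !![Q, I * r * lam - z; I * r * lam - z, -(σ * Q')]
      = !![Q, I * r * lam - z; I * r * lam - z, -(σ * Q')] *
        !![I * r * lam, 0; 0, I * r / lam] := by
  have htr' : z ^ 2 * lam + lam = I * r * (lam ^ 2 + 1) * z := by
    field_simp at htr
    linear_combination htr
  rw [mul_fin_two, mul_fin_two]
  congr 1
  refine vec2_eq (vec2_eq ?_ ?_) (vec2_eq ?_ ?_) <;> field_simp
  · ring
  · linear_combination (-lam) * hQ - htr' - r ^ 2 * lam * I_sq
  · linear_combination z * hQ + I * r * htr' + r ^ 2 * z * I_sq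
  · linear_combination (-(σ * Q')) * htr'

theorem V_mul_Y (hz : z ≠ 0) (hlam : lam ≠ 0)
    (hQ : Q * (σ * Q') = r ^ 2 + 1)
    (htr : z + 1 / z = I * r * (lam + 1 / lam)) :
    (!![I - I * z ^ 2, -(I * Q * (z - 1 / z));
        -(I * σ * Q' * (z - 1 / z)), -I + I / z ^ 2] : Matrix (Fin 2) (Fin 2) ℂ) *
        !![Q, I * r * lam - z; I * r * lam - z, -(σ * Q')]
      = !![Q, I * r * lam - z; I * r * lam - z, -(σ * Q')] *
        !![r * lam * (z - 1 / z), 0; 0, (r / lam) * (z - 1 / z)] := by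
  have hdiag : (-I * (z - 1 / z)) • !![I * r * lam, 0; 0, I * r / lam]
      = !![r * lam * (z - 1 / z), 0; 0, (r / lam) * (z - 1 / z)] := by
    rw [smul_of, smul_vec2, smul_vec2, smul_vec2]
    congr 1
    refine vec2_eq (vec2_eq ?_ ?_) (vec2_eq ?_ ?_) <;> simp only [smul_eq_mul, mul_zero]
    · linear_combination (-r * lam * (z - 1 / z)) * I_sq
    · linear_combination (-(r / lam) * (z - 1 / z)) * I_sq
  rw [V_eq_smul σ Q Q' z hz, Matrix.smul_mul, M_mul_Y hz hlam hQ htr,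
    ← Matrix.mul_smul, hdiag]

end

theorem mul_conj_swap_of_real {σ a b c : ℂ} (hσ : conj σ = σ) (hc : conj c = c)
    (h : σ * a * conj b = c) : σ * b * conj a = c := by
  have := congrArg conj h
  simp only [map_mul, hσ, hc, conj_conj] at this
  linear_combination this

theorem columns_of_Y_are_eigenvectors_of_V_general (σ : ℂ) (hσ : σ = 1 ∨ σ = -1)
    (Qp Qm : ℂ) (Q0 r : ℝ) (hQ0 : Q0 ^ 2 = r ^ 2 + 1)
    (hrel : σ * Qp * (starRingEnd ℂ) Qm = (Q0 : ℂ) ^ 2)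
    (z lam : ℂ) (hz : z ≠ 0) (hlam : lam ≠ 0)
    (huni : z + 1 / z = I * r * (lam + 1 / lam)) :
    (!![I - I * z ^ 2, -(I * Qp * (z - 1 / z));
        -(I * σ * (starRingEnd ℂ) Qm * (z - 1 / z)), -I + I / z ^ 2] :
          Matrix (Fin 2) (Fin 2) ℂ) *
        !![Qp, I * r * lam - z; I * r * lam - z, -(σ * (starRingEnd ℂ) Qm)]
      = !![Qp, I * r * lam - z; I * r * lam - z, -(σ * (starRingEnd ℂ) Qm)] *
        !![r * lam * (z - 1 / z), 0; 0, (r / lam) * (z - 1 / z)] ∧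
    (!![I - I * z ^ 2, -(I * Qm * (z - 1 / z));
        -(I * σ * (starRingEnd ℂ) Qp * (z - 1 / z)), -I + I / z ^ 2] :
          Matrix (Fin 2) (Fin 2) ℂ) *
        !![Qm, I * r * lam - z; I * r * lam - z, -(σ * (starRingEnd ℂ) Qp)]
      = !![Qm, I * r * lam - z; I * r * lam - z, -(σ * (starRingEnd ℂ) Qp)] *
        !![r * lam * (z - 1 / z), 0; 0, (r / lam) * (z - 1 / z)] := by
  have hQ0' : (Q0 : ℂ) ^ 2 = (r : ℂ) ^ 2 + 1 := by exact_mod_cast hQ0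
  have hσ_real : conj σ = σ := by rcases hσ with rfl | rfl <;> simp
  have hrel' := mul_conj_swap_of_real hσ_real (by simp) hrel
  exact ⟨V_mul_Y hz hlam (by linear_combination hrel + hQ0') huni,
    V_mul_Y hz hlam (by linear_combination hrel' + hQ0') huni⟩

/-- The columns of Y± are eigenvectors of V± with eigenvalues
r λ (z - 1/z) and (r/λ)(z - 1/z): V± Y± = Y± diag(r λ (z-1/z), (r/λ)(z-1/z)). -/
theorem columns_of_Y_are_eigenvectors_of_V (σ : ℂ) (hσ : σ = 1 ∨ σ = -1)
    (Qp Qm : ℂ) (Q0 r : ℝ) (hr : 0 < r) (hQ0 : Q0 ^ 2 = r ^ 2 + 1)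
    (hrel : σ * Qp * (starRingEnd ℂ) Qm = (Q0 : ℂ) ^ 2)
    (z lam : ℂ) (hz : z ≠ 0) (hlam : lam ≠ 0)
    (huni : z + 1 / z = I * r * (lam + 1 / lam)) :
    (!![I - I * z ^ 2, -(I * Qp * (z - 1 / z));
        -(I * σ * (starRingEnd ℂ) Qm * (z - 1 / z)), -I + I / z ^ 2] :
          Matrix (Fin 2) (Fin 2) ℂ) *
        !![Qp, I * r * lam - z; I * r * lam - z, -(σ * (starRingEnd ℂ) Qm)]
      = !![Qp, I * r * lam - z; I * r * lam - z, -(σ * (starRingEnd ℂ) Qm)] *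
        !![r * lam * (z - 1 / z), 0; 0, (r / lam) * (z - 1 / z)] ∧
    (!![I - I * z ^ 2, -(I * Qm * (z - 1 / z));
        -(I * σ * (starRingEnd ℂ) Qp * (z - 1 / z)), -I + I / z ^ 2] :
          Matrix (Fin 2) (Fin 2) ℂ) *
        !![Qm, I * r * lam - z; I * r * lam - z, -(σ * (starRingEnd ℂ) Qp)]
      = !![Qm, I * r * lam - z; I * r * lam - z, -(σ * (starRingEnd ℂ) Qp)] *
        !![r * lam * (z - 1 / z), 0; 0, (r / lam) * (z - 1 / z)] :=
  columns_of_Y_are_eigenvectors_of_V_general σ hσ Qp Qm Q0 r hQ0 hrel z lam hz hlam huni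
end
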